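/- arXiv:math/0411086 — 2 statements merged into one kernel-verified Lean document; each statement's English description precedes it below -/
import Mathlib

section
/- Let D ⊂ ℂⁿ be a bounded domain. Let f_k, f : D → D be holomorphic maps whose images are relatively compact in D, and suppose f_k → f uniformly on compact subsets of D. Then the set {τ(f_k) : k ∈ ℕ} of fixed points has compact closure contained in D. -/
/-!
For `k` large, `f k` maps a fixed compact neighbourhood `N ⊆ D` of `closure (g '' D)` into
itself, by uniform convergence on `N`. The fixed point of `f k` attracts every orbit in `D`,
in particular the orbits starting in `N`, so it lies in the closed set `N`.

Attraction (Ritt–Wavre): since `f '' D` is relatively compact, a dilation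
`z + (1 + t) • (f - z)` still maps `D` into `D`, and the Cauchy estimates for its iterates give
`‖(f' z) ^ m‖ ≤ C (1 + t) ^ (-m)`, so some iterate `F` of `f` has `‖F' z‖ < 1` and attracts a
neighbourhood of `z`. The iterates of `F` are uniformly bounded, hence equicontinuous, so the
basin of `z` is also relatively closed in `D`; by connectedness it is all of `D`.
-/

open Metric Set Function Filter Topology

lemma tendsto_iterate_of_dist_le_mul {X : Type*} [PseudoMetricSpace X] {F : X → X} {z : X}
    {r q : ℝ} (hq₀ : 0 ≤ q) (hq : q < 1)
    (hF : ∀ x ∈ ball z r, dist (F x) z ≤ q * dist x z)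
    {x : X} (hx : x ∈ ball z r) :
    Tendsto (fun j => F^[j] x) atTop (𝓝 z) := by
  have hbound : ∀ j, F^[j] x ∈ ball z r ∧ dist (F^[j] x) z ≤ q ^ j * dist x z := by
    intro j
    induction j with
    | zero => simpa using hx
    | succ j ih =>
      rw [iterate_succ_apply']
      have hstep := hF _ ih.1
      refine ⟨mem_ball.2 (hstep.trans_lt ?_), ?_⟩
      · exact (mul_le_of_le_one_left dist_nonneg hq.le).trans_lt ih.1
      · calc dist (F (F^[j] x)) z ≤ q * dist (F^[j] x) z := hstep
          _ ≤ q * (q ^ j * dist x z) := by gcongr; exact ih.2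
          _ = q ^ (j + 1) * dist x z := by ring
  refine tendsto_iff_dist_tendsto_zero.2
    (squeeze_zero (fun _ => dist_nonneg) (fun j => (hbound j).2) ?_)
  simpa using (tendsto_pow_atTop_nhds_zero_of_lt_one hq₀ hq).mul_const (dist x z)

lemma HasFDerivAt.eventually_tendsto_iterate {𝕜 E : Type*} [NontriviallyNormedField 𝕜]
    [NormedAddCommGroup E] [NormedSpace 𝕜 E] {F : E → E} {L : E →L[𝕜] E} {z : E}
    (hF : HasFDerivAt F L z) (hFz : IsFixedPt F z) (hL : ‖L‖ < 1) :
    ∀ᶠ x in 𝓝 z, Tendsto (fun j => F^[j] x) atTop (𝓝 z) := by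
  obtain ⟨q, hLq, hq⟩ := exists_between hL
  obtain ⟨r, hr, hlin⟩ := eventually_nhds_iff_ball.1
    (Asymptotics.isLittleO_iff.1 hF.isLittleO (c := q - ‖L‖) (by linarith))
  have hcontr : ∀ x ∈ ball z r, dist (F x) z ≤ q * dist x z := by
    intro x hx
    rw [dist_eq_norm, dist_eq_norm]
    calc ‖F x - z‖ = ‖(F x - F z - L (x - z)) + L (x - z)‖ := by rw [hFz.eq]; abel_nf
      _ ≤ (q - ‖L‖) * ‖x - z‖ + ‖L‖ * ‖x - z‖ :=
        norm_add_le_of_le (hlin x hx) (L.le_opNorm _)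
      _ = q * ‖x - z‖ := by ring
  filter_upwards [ball_mem_nhds z hr] with x hx
  exact tendsto_iterate_of_dist_le_mul ((norm_nonneg L).trans hLq.le) hq hcontr hx

lemma Set.MapsTo.mapsTo_closedBall_diam {X Y : Type*} [PseudoMetricSpace X] [PseudoMetricSpace Y]
    {F : X → Y} {U : Set X} {B : Set Y} (hF : MapsTo F U B) (hB : Bornology.IsBounded B)
    {x : X} (hx : x ∈ U) : MapsTo F U (closedBall (F x) (diam B)) :=
  fun _ hu => mem_closedBall.2 (dist_le_diam_of_mem hB (hF hu) (hF hx))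

section Holomorphic

variable {E : Type*} [NormedAddCommGroup E] [NormedSpace ℂ E]

lemma equicontinuousAt_of_mapsTo_ball {ι F : Type*} [NormedAddCommGroup F] [NormedSpace ℂ F]
    {G : ι → E → F} {x : E} {r M : ℝ} (hr : 0 < r)
    (hd : ∀ i, DifferentiableOn ℂ (G i) (ball x r))
    (hmaps : ∀ i, MapsTo (G i) (ball x r) (closedBall (G i x) M)) :
    EquicontinuousAt G x := by
  refine Metric.equicontinuousAt_of_continuity_modulus (fun y => M / r * dist y x) ?_ G ?_
  · simpa using ((continuous_id.dist (continuous_const (y := x))).tendsto x).const_mul (M / r)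
  · filter_upwards [ball_mem_nhds x hr] with y hy i
    rw [dist_comm]
    exact Complex.dist_le_div_mul_dist_of_mapsTo_ball (hd i) (hmaps i) hy

variable {D : Set E}

lemma tendsto_iterate_of_eventually_tendsto {G : E → E} {z : E} (hDopen : IsOpen D)
    (hDpre : IsPreconnected D) (hDbdd : Bornology.IsBounded D) (hG : DifferentiableOn ℂ G D)
    (hmaps : MapsTo G D D) (hz : z ∈ D)
    (hattr : ∀ᶠ x in 𝓝 z, Tendsto (fun j => G^[j] x) atTop (𝓝 z)) {y : E} (hy : y ∈ D) :
    Tendsto (fun j => G^[j] y) atTop (𝓝 z) := by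
  set S := {x | Tendsto (fun j => G^[j] x) atTop (𝓝 z)}
  have hS_open : IsOpen (D ∩ S) := by
    rw [isOpen_iff_mem_nhds]
    rintro x ⟨hxD, hxS⟩
    obtain ⟨j, hj⟩ := (hxS.eventually (interior_mem_nhds.2 hattr)).exists
    have hnhds : D ∩ G^[j] ⁻¹' interior S ∈ 𝓝 x :=
      ((hG.iterate hmaps j).continuousOn.isOpen_inter_preimage hDopen isOpen_interior).mem_nhds
        ⟨hxD, hj⟩
    filter_upwards [hnhds] with u ⟨huD, hu⟩
    refine ⟨huD, (tendsto_add_atTop_iff_nat j).1 ?_⟩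
    simpa [S, iterate_add_apply] using interior_subset hu
  have hS_closed : closure (D ∩ S) ∩ D ⊆ D ∩ S := by
    rintro x ⟨hx, hxD⟩
    obtain ⟨r, hr, hball⟩ := Metric.isOpen_iff.1 hDopen x hxD
    have hequi : EquicontinuousAt (fun j => G^[j]) x :=
      equicontinuousAt_of_mapsTo_ball hr (fun j => (hG.iterate hmaps j).mono hball) fun j =>
        ((hmaps.iterate j).mono_left hball).mapsTo_closedBall_diam hDbdd (mem_ball_self hr)
    exact ⟨hxD, hequi.tendsto_of_mem_closure tendsto_const_nhds (fun u hu => hu.2) hx⟩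
  exact (hDpre.subset_of_closure_inter_subset hS_open ⟨z, hz, hz, hattr.self_of_nhds⟩
    hS_closed hy).2

lemma norm_pow_le_diam_div_of_mapsTo {F : E → E} {L : E →L[ℂ] E} {z : E} {r : ℝ}
    (hDbdd : Bornology.IsBounded D) (hF : DifferentiableOn ℂ F D) (hmaps : MapsTo F D D)
    (hFz : IsFixedPt F z) (hL : HasFDerivAt F L z) (hr : 0 < r) (hball : ball z r ⊆ D)
    (m : ℕ) : ‖L ^ m‖ ≤ diam D / r := by
  have h := Complex.norm_fderiv_le_div_of_mapsTo_ball ((hF.iterate hmaps m).mono hball)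
    (((hmaps.iterate m).mono_left hball).mapsTo_closedBall_diam hDbdd (mem_ball_self hr)) hr
  rwa [(hL.iterate hFz m).fderiv] at h

lemma exists_mapsTo_dilation {f : E → E} {z : E} (hDopen : IsOpen D)
    (hDbdd : Bornology.IsBounded D) (hcpt : IsCompact (closure (f '' D)))
    (hsub : closure (f '' D) ⊆ D) (hz : z ∈ D) :
    ∃ t : ℝ, 0 < t ∧ MapsTo (fun x => z + (1 + t : ℂ) • (f x - z)) D D := by
  obtain ⟨δ, hδ, hthick⟩ := hcpt.exists_thickening_subset_open hDopen hsub
  obtain ⟨t, ht, htδ⟩ : ∃ t : ℝ, 0 < t ∧ t * diam D < δ := by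
    refine ⟨δ / (diam D + 1), by positivity, ?_⟩
    rw [div_mul_eq_mul_div, div_lt_iff₀ (by positivity)]
    nlinarith [diam_nonneg (s := D)]
  refine ⟨t, ht, fun x hx => hthick ?_⟩
  have hfx : f x ∈ closure (f '' D) := subset_closure (mem_image_of_mem f hx)
  refine mem_thickening_iff.2 ⟨f x, hfx, ?_⟩
  calc dist (z + (1 + t : ℂ) • (f x - z)) (f x) = ‖(t : ℂ) • (f x - z)‖ := by
        rw [dist_eq_norm]; congr 1; module
    _ = t * dist (f x) z := by
        rw [norm_smul, Complex.norm_real, Real.norm_of_nonneg ht.le, dist_eq_norm]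
    _ ≤ t * diam D := by gcongr; exact dist_le_diam_of_mem hDbdd (hsub hfx) hz
    _ < δ := htδ

lemma exists_norm_fderiv_pow_lt_one {f : E → E} {z : E} (hDopen : IsOpen D)
    (hDbdd : Bornology.IsBounded D) (hf : DifferentiableOn ℂ f D)
    (hcpt : IsCompact (closure (f '' D))) (hsub : closure (f '' D) ⊆ D) (hz : z ∈ D)
    (hfz : IsFixedPt f z) : ∃ m : ℕ, ‖fderiv ℂ f z ^ m‖ < 1 := by
  obtain ⟨t, ht, hmaps⟩ := exists_mapsTo_dilation hDopen hDbdd hcpt hsub hz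
  obtain ⟨r, hr, hball⟩ := Metric.isOpen_iff.1 hDopen z hz
  set A := fderiv ℂ f z
  have hA : HasFDerivAt f A z := (hf.differentiableAt (hDopen.mem_nhds hz)).hasFDerivAt
  have hdil : HasFDerivAt (fun x => z + (1 + t : ℂ) • (f x - z)) ((1 + t : ℂ) • A) z :=
    ((hA.sub_const z).const_smul _).const_add z
  have hdil_diff : DifferentiableOn ℂ (fun x => z + (1 + t : ℂ) • (f x - z)) D :=
    ((hf.sub_const z).const_smul _).const_add z
  have hnorm : ‖(1 + t : ℂ)‖ = 1 + t := by
    norm_cast; exact Real.norm_of_nonneg (by positivity)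
  have hbound : ∀ m : ℕ, (1 + t) ^ m * ‖A ^ m‖ ≤ diam D / r := fun m => by
    have h := norm_pow_le_diam_div_of_mapsTo hDbdd hdil_diff hmaps
      (by simp [IsFixedPt, hfz.eq]) hdil hr hball m
    rwa [smul_pow, norm_smul, norm_pow, hnorm] at h
  obtain ⟨m, hm⟩ := ((tendsto_pow_atTop_atTop_of_one_lt (by linarith : 1 < 1 + t))
    |>.eventually_gt_atTop (diam D / r)).exists
  refine ⟨m, lt_of_mul_lt_mul_left ?_ (by positivity : (0 : ℝ) ≤ (1 + t) ^ m)⟩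
  rw [mul_one]
  exact (hbound m).trans_lt hm

lemma IsFixedPt.mem_of_mapsTo {N : Set E} {f : E → E} {z : E} (hDopen : IsOpen D)
    (hDpre : IsPreconnected D) (hDbdd : Bornology.IsBounded D) (hf : DifferentiableOn ℂ f D)
    (hcpt : IsCompact (closure (f '' D))) (hsub : closure (f '' D) ⊆ D) (hz : z ∈ D)
    (hfz : IsFixedPt f z) (hN : IsClosed N) (hND : N ⊆ D) (hNne : N.Nonempty)
    (hfN : MapsTo f N N) : z ∈ N := by
  have hmaps : MapsTo f D D := (mapsTo_image f D).mono_right (subset_closure.trans hsub)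
  obtain ⟨m, hm⟩ := exists_norm_fderiv_pow_lt_one hDopen hDbdd hf hcpt hsub hz hfz
  obtain ⟨y, hy⟩ := hNne
  have hA := (hf.differentiableAt (hDopen.mem_nhds hz)).hasFDerivAt
  have hattr := (hA.iterate hfz m).eventually_tendsto_iterate (hfz.iterate m) hm
  have hlim := tendsto_iterate_of_eventually_tendsto hDopen hDpre hDbdd (hf.iterate hmaps m)
    (hmaps.iterate m) hz hattr (hND hy)
  refine hN.mem_of_tendsto hlim (Eventually.of_forall fun j => ?_)
  rw [← iterate_mul]
  exact hfN.iterate _ hy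

end Holomorphic

lemma TendstoUniformlyOn.eventually_mapsTo_cthickening {ι X α : Type*} [PseudoMetricSpace α]
    {F : ι → X → α} {g : X → α} {l : Filter ι} {s : Set X} {K : Set α} {ε : ℝ}
    (hF : TendstoUniformlyOn F g l s) (hε : 0 < ε) (hg : MapsTo g s K) :
    ∀ᶠ i in l, MapsTo (F i) s (cthickening ε K) := by
  filter_upwards [Metric.tendstoUniformlyOn_iff.1 hF ε hε] with i hi x hx
  exact mem_cthickening_of_dist_le _ _ ε K (hg hx) (dist_comm (g x) _ ▸ (hi x hx).le)

lemma isCompact_closure_range_of_eventually_mem {X : Type*} [TopologicalSpace X] [T2Space X]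
    {z : ℕ → X} {K D : Set X} (hK : IsCompact K) (hKD : K ⊆ D) (hz : ∀ k, z k ∈ D)
    (hev : ∀ᶠ k in atTop, z k ∈ K) :
    IsCompact (closure (range z)) ∧ closure (range z) ⊆ D := by
  obtain ⟨k₀, hk₀⟩ := eventually_atTop.1 hev
  have hT : IsCompact (K ∪ z '' Iio k₀) := hK.union ((finite_Iio k₀).image z).isCompact
  have hrange : range z ⊆ K ∪ z '' Iio k₀ := by
    rintro _ ⟨k, rfl⟩
    rcases le_or_gt k₀ k with hk | hk
    · exact Or.inl (hk₀ k hk)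
    · exact Or.inr ⟨k, hk, rfl⟩
  have hcl := closure_minimal hrange hT.isClosed
  refine ⟨hT.of_isClosed_subset isClosed_closure hcl, hcl.trans ?_⟩
  rintro _ (hx | ⟨k, -, rfl⟩)
  exacts [hKD hx, hz k]

theorem fixed_points_relatively_compact_general (n : ℕ) (D : Set (Fin n → ℂ))
    (hDopen : IsOpen D) (hDconn : IsConnected D) (hDbdd : Bornology.IsBounded D)
    (f : ℕ → (Fin n → ℂ) → (Fin n → ℂ)) (g : (Fin n → ℂ) → (Fin n → ℂ))
    (hf : ∀ k, DifferentiableOn ℂ (f k) D)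
    (hfcpt : ∀ k, IsCompact (closure (f k '' D)))
    (hfsub : ∀ k, closure (f k '' D) ⊆ D)
    (hgcpt : IsCompact (closure (g '' D))) (hgsub : closure (g '' D) ⊆ D)
    (hconv : TendstoLocallyUniformlyOn (fun k => f k) g Filter.atTop D)
    (z : ℕ → Fin n → ℂ) (hz : ∀ k, z k ∈ D) (hzfix : ∀ k, f k (z k) = z k) :
    IsCompact (closure (Set.range z)) ∧ closure (Set.range z) ⊆ D := by
  obtain ⟨δ, hδ, hthick⟩ := hgcpt.exists_cthickening_subset_open hDopen hgsub
  set N := cthickening (δ / 2) (closure (g '' D))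
  have hND : N ⊆ D := (cthickening_mono (by linarith) _).trans hthick
  have hNcpt : IsCompact N := hgcpt.cthickening
  have hNne : N.Nonempty :=
    ((hDconn.nonempty.image g).mono subset_closure).mono (self_subset_cthickening _)
  have hunif : TendstoUniformlyOn f g atTop N :=
    (tendstoLocallyUniformlyOn_iff_tendstoUniformlyOn_of_compact hNcpt).1 (hconv.mono hND)
  have hgN : MapsTo g N (closure (g '' D)) := fun x hx =>
    subset_closure (mem_image_of_mem g (hND hx))
  refine isCompact_closure_range_of_eventually_mem hNcpt hND hz ?_
  filter_upwards [hunif.eventually_mapsTo_cthickening (half_pos hδ) hgN] with k hk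
  exact IsFixedPt.mem_of_mapsTo hDopen hDconn.isPreconnected hDbdd (hf k) (hfcpt k) (hfsub k)
    (hz k) (hzfix k) isClosed_cthickening hND hNne hk

/-- If holomorphic self-maps `f_k` of a bounded domain `D ⊆ ℂⁿ` with relatively
compact images converge locally uniformly on `D` to `f` (also with relatively
compact image), then the set of their fixed points `{τ(f_k)}` is relatively
compact in `D`. -/
theorem fixed_points_relatively_compact (n : ℕ) (D : Set (Fin n → ℂ))
    (hDopen : IsOpen D) (hDconn : IsConnected D) (hDbdd : Bornology.IsBounded D)
    (f : ℕ → (Fin n → ℂ) → (Fin n → ℂ)) (g : (Fin n → ℂ) → (Fin n → ℂ))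
    (hf : ∀ k, DifferentiableOn ℂ (f k) D) (hfmaps : ∀ k, Set.MapsTo (f k) D D)
    (hfcpt : ∀ k, IsCompact (closure (f k '' D)))
    (hfsub : ∀ k, closure (f k '' D) ⊆ D)
    (hg : DifferentiableOn ℂ g D) (hgmaps : Set.MapsTo g D D)
    (hgcpt : IsCompact (closure (g '' D))) (hgsub : closure (g '' D) ⊆ D)
    (hconv : TendstoLocallyUniformlyOn (fun k => f k) g Filter.atTop D)
    (z : ℕ → Fin n → ℂ) (hz : ∀ k, z k ∈ D) (hzfix : ∀ k, f k (z k) = z k) :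
    IsCompact (closure (Set.range z)) ∧ closure (Set.range z) ⊆ D :=
  fixed_points_relatively_compact_general n D hDopen hDconn hDbdd f g hf hfcpt hfsub hgcpt hgsub
    hconv z hz hzfix
end

section
/- Let Δ be the open unit disc in ℂ, Y ⊂ ℂ a nonempty open set, and F : Y × Δ → Δ a holomorphic map such that for every y ∈ Y the map f_y = F(y,·) : Δ → Δ has image with compact closure contained in Δ. Let τ_F : Y → Δ assign to y the unique fixed point of f_y. Then τ_F is holomorphic, and for every y₀ ∈ Y its derivative satisfies τ_F'(y₀) = (∂F/∂y)(y₀, τ_F(y₀)) / (1 − (∂F/∂z)(y₀, τ_F(y₀))), where ∂F/∂y and ∂F/∂z denote the partial complex derivatives of F in the first and second variable respectively. -/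
/-!
Conjugating `f = F (y, ·)` by the Möbius involution of the disc that exchanges its fixed point
`τ y` with `0` gives a self-map of the disc fixing `0` whose image lies in a disc of radius
`R < 1`. By the Schwarz lemma its derivative at `0`, which is `f'(τ y)`, has modulus at most `R`,
and it has no fixed point other than `0`. Uniqueness of the fixed point and a minimum-modulus
argument make `τ` continuous; once `τ` is continuous and `f'(τ y₀) ≠ 1`, the identity
`F (y, τ y) = τ y` can be differentiated at `y₀`.
-/

open Metric Set Filter Topology Asymptotics Function ComplexConjugate

noncomputable def mobiusSwap (a z : ℂ) : ℂ := (a - z) / (1 - conj a * z)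

section mobiusSwap

variable {a z : ℂ}

theorem one_sub_conj_mul_ne_zero (ha : ‖a‖ < 1) (hz : ‖z‖ < 1) : 1 - conj a * z ≠ 0 := by
  have : ‖conj a * z‖ < 1 := by
    rw [norm_mul, Complex.norm_conj]
    exact mul_lt_one_of_nonneg_of_lt_one_left (norm_nonneg a) ha hz.le
  exact sub_ne_zero.2 fun h => by simp [← h] at this

@[simp] theorem mobiusSwap_self : mobiusSwap a a = 0 := by simp [mobiusSwap]

@[simp] theorem mobiusSwap_zero : mobiusSwap a 0 = a := by simp [mobiusSwap]

theorem normSq_one_sub_conj_mul_sub_normSq_sub (a z : ℂ) :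
    Complex.normSq (1 - conj a * z) - Complex.normSq (a - z) =
      (1 - Complex.normSq a) * (1 - Complex.normSq z) := by
  simp only [Complex.normSq_apply, Complex.sub_re, Complex.sub_im, Complex.mul_re,
    Complex.mul_im, Complex.conj_re, Complex.conj_im, Complex.one_re, Complex.one_im]
  ring

theorem norm_mobiusSwap_lt_one (ha : ‖a‖ < 1) (hz : ‖z‖ < 1) : ‖mobiusSwap a z‖ < 1 := by
  rw [mobiusSwap, norm_div, div_lt_one (norm_pos_iff.2 (one_sub_conj_mul_ne_zero ha hz)),
    ← sq_lt_sq₀ (norm_nonneg _) (norm_nonneg _), Complex.sq_norm, Complex.sq_norm, ← sub_pos,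
    normSq_one_sub_conj_mul_sub_normSq_sub, ← Complex.sq_norm, ← Complex.sq_norm]
  apply mul_pos <;> nlinarith [norm_nonneg a, norm_nonneg z]

theorem mapsTo_mobiusSwap (ha : ‖a‖ < 1) : MapsTo (mobiusSwap a) (ball 0 1) (ball 0 1) :=
  fun _ hz => mem_ball_zero_iff.2 (norm_mobiusSwap_lt_one ha (mem_ball_zero_iff.1 hz))

theorem mobiusSwap_mobiusSwap (ha : ‖a‖ < 1) (hz : ‖z‖ < 1) :
    mobiusSwap a (mobiusSwap a z) = z := by
  have hD : 1 - z * conj a ≠ 0 := by rw [mul_comm]; exact one_sub_conj_mul_ne_zero ha hz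
  have hD' := one_sub_conj_mul_ne_zero ha (norm_mobiusSwap_lt_one ha hz)
  rw [mobiusSwap, div_eq_iff hD']
  simp only [mobiusSwap]
  field_simp
  ring

theorem differentiableAt_mobiusSwap (ha : ‖a‖ < 1) (hz : ‖z‖ < 1) :
    DifferentiableAt ℂ (mobiusSwap a) z := by
  unfold mobiusSwap
  have := one_sub_conj_mul_ne_zero ha hz
  fun_prop (disch := assumption)

theorem differentiableOn_mobiusSwap (ha : ‖a‖ < 1) :
    DifferentiableOn ℂ (mobiusSwap a) (ball 0 1) := fun _ hz =>
  (differentiableAt_mobiusSwap ha (mem_ball_zero_iff.1 hz)).differentiableWithinAt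

theorem deriv_mobiusSwap_self_mul_deriv_mobiusSwap_zero (ha : ‖a‖ < 1) :
    deriv (mobiusSwap a) a * deriv (mobiusSwap a) 0 = 1 := by
  have hcomp : HasDerivAt (mobiusSwap a ∘ mobiusSwap a)
      (deriv (mobiusSwap a) a * deriv (mobiusSwap a) 0) 0 := by
    refine HasDerivAt.comp (h₂ := mobiusSwap a) 0 ?_
      (differentiableAt_mobiusSwap ha (by simp)).hasDerivAt
    simpa using (differentiableAt_mobiusSwap ha ha).hasDerivAt
  have hid : mobiusSwap a ∘ mobiusSwap a =ᶠ[𝓝 0] id := by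
    filter_upwards [ball_mem_nhds (0 : ℂ) one_pos] with z hz
    exact mobiusSwap_mobiusSwap ha (mem_ball_zero_iff.1 hz)
  exact hcomp.unique ((hasDerivAt_id 0).congr_of_eventuallyEq hid)

end mobiusSwap

section RelativelyCompactImage

variable {f : ℂ → ℂ} {K : Set ℂ} {a : ℂ}

theorem exists_lt_one_mapsTo_mobiusSwap_conj (hK : IsCompact K) (hK1 : K ⊆ ball 0 1)
    (hfK : MapsTo f (ball 0 1) K) (ha : ‖a‖ < 1) :
    ∃ R < 1, MapsTo (mobiusSwap a ∘ f ∘ mobiusSwap a) (ball 0 1) (closedBall 0 R) := by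
  have hψK : IsCompact (mobiusSwap a '' K) :=
    hK.image_of_continuousOn ((differentiableOn_mobiusSwap ha).continuousOn.mono hK1)
  obtain ⟨R, hR, hsub⟩ := exists_lt_subset_ball hψK.isClosed
    (((mapsTo_mobiusSwap ha).mono_left hK1).image_subset)
  exact ⟨R, hR, ((mapsTo_image _ K).comp (hfK.comp (mapsTo_mobiusSwap ha))).mono_right
    (hsub.trans ball_subset_closedBall)⟩

theorem differentiableOn_mobiusSwap_conj (hf : DifferentiableOn ℂ f (ball 0 1))
    (hK1 : K ⊆ ball 0 1) (hfK : MapsTo f (ball 0 1) K) (ha : ‖a‖ < 1) :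
    DifferentiableOn ℂ (mobiusSwap a ∘ f ∘ mobiusSwap a) (ball 0 1) :=
  (differentiableOn_mobiusSwap ha).comp (hf.comp (differentiableOn_mobiusSwap ha)
    (mapsTo_mobiusSwap ha)) (fun _ hz => hK1 (hfK (mapsTo_mobiusSwap ha hz)))

theorem norm_deriv_lt_one_of_mapsTo_isCompact (hf : DifferentiableOn ℂ f (ball 0 1))
    (hK : IsCompact K) (hK1 : K ⊆ ball 0 1) (hfK : MapsTo f (ball 0 1) K) (ha : ‖a‖ < 1)
    (hfa : IsFixedPt f a) : ‖deriv f a‖ < 1 := by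
  obtain ⟨R, hR, hmaps⟩ := exists_lt_one_mapsTo_mobiusSwap_conj hK hK1 hfK ha
  set ψ := mobiusSwap a
  have hψ0 : ψ 0 = a := mobiusSwap_zero
  have hdiff := differentiableOn_mobiusSwap_conj hf hK1 hfK ha
  have hfix0 : (ψ ∘ f ∘ ψ) 0 = 0 := by simp [ψ, hfa.eq]
  have hderiv : deriv (ψ ∘ f ∘ ψ) 0 = deriv f a := by
    have hf' : HasDerivAt f (deriv f a) (ψ 0) := by
      rw [hψ0]
      exact (hf.differentiableAt (isOpen_ball.mem_nhds (mem_ball_zero_iff.2 ha))).hasDerivAt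
    have hψa : HasDerivAt ψ (deriv ψ a) (f (ψ 0)) := by
      rw [hψ0, hfa.eq]; exact (differentiableAt_mobiusSwap ha ha).hasDerivAt
    have := hψa.comp 0 (hf'.comp 0 (differentiableAt_mobiusSwap ha (by simp)).hasDerivAt)
    rw [this.deriv]
    linear_combination deriv f a * deriv_mobiusSwap_self_mul_deriv_mobiusSwap_zero ha
  have hschwarz := Complex.norm_deriv_le_div_of_mapsTo_ball hdiff (by rwa [hfix0]) one_pos
  rw [hderiv, div_one] at hschwarz
  exact hschwarz.trans_lt hR

theorem eq_of_isFixedPt_of_mapsTo_isCompact (hf : DifferentiableOn ℂ f (ball 0 1))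
    (hK : IsCompact K) (hK1 : K ⊆ ball 0 1) (hfK : MapsTo f (ball 0 1) K) (ha : ‖a‖ < 1)
    (hfa : IsFixedPt f a) {z : ℂ} (hz : ‖z‖ < 1) (hfz : IsFixedPt f z) : z = a := by
  obtain ⟨R, hR, hmaps⟩ := exists_lt_one_mapsTo_mobiusSwap_conj hK hK1 hfK ha
  set ψ := mobiusSwap a
  have hdiff := differentiableOn_mobiusSwap_conj hf hK1 hfK ha
  have hfix0 : (ψ ∘ f ∘ ψ) 0 = 0 := by simp [ψ, hfa.eq]
  have hfixψz : (ψ ∘ f ∘ ψ) (ψ z) = ψ z := by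
    simp only [comp_apply, ψ, mobiusSwap_mobiusSwap ha hz, hfz.eq]
  have hschwarz := Complex.dist_le_div_mul_dist_of_mapsTo_ball hdiff (by rwa [hfix0])
    (mapsTo_mobiusSwap ha (mem_ball_zero_iff.2 hz))
  rw [hfixψz, hfix0, div_one, dist_zero_right] at hschwarz
  have hψz : ψ z = 0 := norm_eq_zero.1 (by nlinarith [norm_nonneg (ψ z)])
  calc z = ψ (ψ z) := (mobiusSwap_mobiusSwap ha hz).symm
    _ = a := hψz ▸ mobiusSwap_zero

end RelativelyCompactImage

theorem exists_eq_zero_of_norm_lt_on_sphere {g : ℂ → ℂ} {c : ℂ} {r : ℝ} (hr : 0 < r)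
    (hg : DifferentiableOn ℂ g (closedBall c r)) (hlt : ∀ z ∈ sphere c r, ‖g c‖ < ‖g z‖) :
    ∃ z ∈ ball c r, g z = 0 := by
  obtain ⟨z, hz, hmin⟩ := exists_isLocalMin_mem_ball (continuous_norm.comp_continuousOn
    hg.continuousOn) (mem_closedBall_self hr.le) hlt
  have hgball : DifferentiableOn ℂ g (ball c r) := hg.mono ball_subset_closedBall
  refine ⟨z, hz, (Complex.eventually_eq_or_eq_zero_of_isLocalMin_norm
    (hgball.eventually_differentiableAt (isOpen_ball.mem_nhds hz)) hmin).resolve_left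
    fun hconst => ?_⟩
  have hball : EqOn g (fun _ => g z) (ball c r) :=
    (hgball.analyticOnNhd isOpen_ball).eqOn_of_preconnected_of_eventuallyEq analyticOnNhd_const
      (convex_ball c r).isPreconnected hz hconst
  have hclosedBall : EqOn g (fun _ => g z) (closedBall c r) :=
    hball.of_subset_closure hg.continuousOn continuousOn_const ball_subset_closedBall
      (closure_ball c hr.ne').symm.subset
  obtain ⟨w, hw⟩ := (NormedSpace.sphere_nonempty (x := c)).2 hr.le
  have := hlt w hw
  rw [hclosedBall (mem_closedBall_self hr.le), hclosedBall (sphere_subset_closedBall hw)] at this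
  exact this.false

theorem continuousAt_of_isFixedPt_of_unique {α : Type*} [TopologicalSpace α] {F : α × ℂ → ℂ}
    {τ : α → ℂ} {Y : Set α} {U : Set ℂ} {y₀ : α} (hY : Y ∈ 𝓝 y₀) (hU : U ∈ 𝓝 (τ y₀))
    (hF : ContinuousOn F (Y ×ˢ U)) (hFz : ∀ y ∈ Y, DifferentiableOn ℂ (fun z => F (y, z)) U)
    (hfix : IsFixedPt (fun z => F (y₀, z)) (τ y₀))
    (huniq : ∀ y ∈ Y, ∀ z ∈ U, IsFixedPt (fun z => F (y, z)) z → z = τ y) :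
    ContinuousAt τ y₀ := by
  set a := τ y₀
  rw [ContinuousAt, Metric.tendsto_nhds]
  intro ε hε
  obtain ⟨ρ, hρ, hρU⟩ := Metric.nhds_basis_closedBall.mem_iff.1 hU
  wlog hρε : ρ < ε generalizing ρ
  · exact this (min ρ (ε / 2)) (lt_min hρ (half_pos hε))
      ((closedBall_subset_closedBall (min_le_left _ _)).trans hρU)
      ((min_le_right _ _).trans_lt (half_lt_self hε))
  have hy₀ : y₀ ∈ Y := mem_of_mem_nhds hY
  have hsphereU : sphere a ρ ⊆ U := sphere_subset_closedBall.trans hρU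
  obtain ⟨m, hm, hmsphere⟩ : ∃ m > 0, ∀ z ∈ sphere a ρ, m ≤ ‖F (y₀, z) - z‖ := by
    obtain ⟨z₁, hz₁, hmin⟩ := (isCompact_sphere a ρ).exists_isMinOn
      ((NormedSpace.sphere_nonempty (x := a)).2 hρ.le)
      (continuous_norm.comp_continuousOn
        (((hFz y₀ hy₀).continuousOn.mono hsphereU).sub continuousOn_id))
    refine ⟨_, norm_pos_iff.2 fun h => ne_of_mem_sphere hz₁ hρ.ne' ?_, fun z hz => hmin hz⟩
    exact huniq y₀ hy₀ z₁ (hsphereU hz₁) (sub_eq_zero.1 h)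
  obtain ⟨V, hV, hVclose⟩ := (isCompact_closedBall a ρ).mem_uniformity_of_prod
    (f := fun y z => F (y, z)) (hF.mono (prod_mono subset_rfl hρU)) hy₀
    (Metric.dist_mem_uniformity (half_pos hm))
  rw [nhdsWithin_eq_nhds.2 hY] at hV
  filter_upwards [hV, hY] with y hyV hyY
  have hclose : ∀ z ∈ closedBall a ρ, ‖F (y, z) - F (y₀, z)‖ < m / 2 :=
    fun z hz => by simpa [dist_eq_norm] using hVclose y hyV z hz
  obtain ⟨c, hc, hc0⟩ := exists_eq_zero_of_norm_lt_on_sphere (g := fun z => F (y, z) - z) hρ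
    (((hFz y hyY).mono hρU).sub differentiableOn_id) fun z hz => by
      have h1 := hclose a (mem_closedBall_self hρ.le)
      have h2 := hclose z (sphere_subset_closedBall hz)
      have h3 := norm_sub_norm_le (F (y₀, z) - z) (F (y₀, z) - F (y, z))
      rw [norm_sub_rev] at h2
      rw [hfix.eq] at h1
      simp only [sub_sub_sub_cancel_left] at h3 ⊢
      linarith [hmsphere z hz]
  rw [← huniq y hyY c (hρU (ball_subset_closedBall hc)) (sub_eq_zero.1 hc0)]
  exact (mem_ball.1 hc).trans hρε

theorem hasDerivAt_of_isFixedPt_of_continuousAt {𝕜 : Type*} [NontriviallyNormedField 𝕜]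
    {F : 𝕜 × 𝕜 → 𝕜} {τ : 𝕜 → 𝕜} {y₀ : 𝕜} (hF : DifferentiableAt 𝕜 F (y₀, τ y₀))
    (hτ : ContinuousAt τ y₀)
    (hfix : ∀ᶠ y in 𝓝 y₀, IsFixedPt (fun z => F (y, z)) (τ y))
    (hq : deriv (fun z => F (y₀, z)) (τ y₀) ≠ 1) :
    HasDerivAt τ (deriv (fun y => F (y, τ y₀)) y₀ / (1 - deriv (fun z => F (y₀, z)) (τ y₀)))
      y₀ := by
  set a := τ y₀
  set L := fderiv 𝕜 F (y₀, a)
  have hL' : HasFDerivAt F L (y₀, a) := hF.hasFDerivAt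
  have hp : HasDerivAt (fun y => F (y, a)) (L (1, 0)) y₀ :=
    hL'.comp_hasDerivAt y₀ ((hasDerivAt_id y₀).prodMk (hasDerivAt_const y₀ a))
  have hq' : HasDerivAt (fun z => F (y₀, z)) (L (0, 1)) a :=
    hL'.comp_hasDerivAt a ((hasDerivAt_const a y₀).prodMk (hasDerivAt_id a))
  rw [hq'.deriv] at hq
  rw [hp.deriv, hq'.deriv]
  set p := L (1, 0)
  set q := L (0, 1)
  set t := p / (1 - q)
  have hq1 : 1 - q ≠ 0 := sub_ne_zero.2 (Ne.symm hq)
  have hL : ∀ u v, L (u, v) = u * p + v * q := fun u v => by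
    rw [show ((u, v) : 𝕜 × 𝕜) = u • (1, 0) + v • (0, 1) by simp, map_add, map_smul, map_smul,
      smul_eq_mul, smul_eq_mul]
  set D : 𝕜 → 𝕜 × 𝕜 := fun y => (y, τ y) - (y₀, a)
  set r : 𝕜 → 𝕜 := fun y => τ y - a - t * (y - y₀)
  have hrD : r =o[𝓝 y₀] D := by
    have h := hL'.isLittleO.comp_tendsto
      ((continuousAt_id.prodMk hτ).tendsto : Tendsto (fun y => (y, τ y)) (𝓝 y₀) (𝓝 (y₀, a)))
    rw [← isLittleO_const_mul_left_iff hq1]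
    refine h.congr' ?_ EventuallyEq.rfl
    filter_upwards [hfix] with y hy
    have hfy : F (y, τ y) = τ y := hy
    have hfa : F (y₀, a) = a := hfix.self_of_nhds
    simp only [comp_apply, id, hfy, hfa, Prod.mk_sub_mk, hL, r, t]
    field_simp
    ring
  have hDO : D =O[𝓝 y₀] fun y => y - y₀ := by
    -- `D y = (y - y₀, t * (y - y₀)) + (0, r y)` and the second summand is `o(D)`
    have h := ((isLittleO_zero _ _).prod_left hrD).right_isBigO_sub
    refine h.trans (((isBigO_refl _ _).prod_left ((isBigO_refl _ _).const_mul_left t)).congr_left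
      fun y => ?_)
    simp [D, r]
  refine hasDerivAt_iff_isLittleO.2 ((hrD.trans_isBigO hDO).congr_left fun y => ?_)
  simp only [r, a, smul_eq_mul, mul_comm]

theorem heins_map_derivative_unit_disc_general
    (Y : Set ℂ) (hYopen : IsOpen Y)
    (F : ℂ × ℂ → ℂ)
    (hF : DifferentiableOn ℂ F (Y ×ˢ Metric.ball (0 : ℂ) 1))
    (hFcpt : ∀ y ∈ Y,
      IsCompact (closure ((fun z => F (y, z)) '' Metric.ball (0 : ℂ) 1)))
    (hFsub : ∀ y ∈ Y,
      closure ((fun z => F (y, z)) '' Metric.ball (0 : ℂ) 1) ⊆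
        Metric.ball (0 : ℂ) 1)
    (τ : ℂ → ℂ)
    (hτmem : ∀ y ∈ Y, τ y ∈ Metric.ball (0 : ℂ) 1)
    (hτfix : ∀ y ∈ Y, F (y, τ y) = τ y) :
    DifferentiableOn ℂ τ Y ∧
      ∀ y₀ ∈ Y, deriv τ y₀ =
        deriv (fun y => F (y, τ y₀)) y₀ /
          (1 - deriv (fun z => F (y₀, z)) (τ y₀)) := by
  have hslice : ∀ y ∈ Y, DifferentiableOn ℂ (fun z => F (y, z)) (ball 0 1) := fun y hy =>
    hF.comp (by fun_prop) fun _ hz => ⟨hy, hz⟩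
  have hmaps : ∀ y ∈ Y, MapsTo (fun z => F (y, z)) (ball 0 1)
      (closure ((fun z => F (y, z)) '' ball 0 1)) := fun _ _ =>
    (mapsTo_image _ _).mono_right subset_closure
  have huniq : ∀ y ∈ Y, ∀ z ∈ ball (0 : ℂ) 1, IsFixedPt (fun z => F (y, z)) z → z = τ y :=
    fun y hy z hz => eq_of_isFixedPt_of_mapsTo_isCompact (hslice y hy) (hFcpt y hy)
      (hFsub y hy) (hmaps y hy) (mem_ball_zero_iff.1 (hτmem y hy)) (hτfix y hy)
      (mem_ball_zero_iff.1 hz)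
  have hderiv : ∀ y₀ ∈ Y, HasDerivAt τ (deriv (fun y => F (y, τ y₀)) y₀ /
      (1 - deriv (fun z => F (y₀, z)) (τ y₀))) y₀ := by
    intro y₀ hy₀
    have hcontract : ‖deriv (fun z => F (y₀, z)) (τ y₀)‖ < 1 :=
      norm_deriv_lt_one_of_mapsTo_isCompact (hslice y₀ hy₀) (hFcpt y₀ hy₀) (hFsub y₀ hy₀)
        (hmaps y₀ hy₀) (mem_ball_zero_iff.1 (hτmem y₀ hy₀)) (hτfix y₀ hy₀)
    have hcont : ContinuousAt τ y₀ :=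
      continuousAt_of_isFixedPt_of_unique (hYopen.mem_nhds hy₀)
        (isOpen_ball.mem_nhds (hτmem y₀ hy₀)) hF.continuousOn hslice (hτfix y₀ hy₀) huniq
    refine hasDerivAt_of_isFixedPt_of_continuousAt
      (hF.differentiableAt ((hYopen.prod isOpen_ball).mem_nhds ⟨hy₀, hτmem y₀ hy₀⟩)) hcont
      (eventually_of_mem (hYopen.mem_nhds hy₀) hτfix) ?_
    exact fun h => by simp [h] at hcontract
  exact ⟨fun y hy => (hderiv y hy).differentiableAt.differentiableWithinAt,
    fun y hy => (hderiv y hy).deriv⟩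

/-- Theorem 2.3 in the one-dimensional case: if `F : Y × Δ → Δ` is holomorphic
and each slice `f_y = F(y,·)` has relatively compact image in the unit disc `Δ`,
then the fixed-point map `τ_F` is holomorphic on `Y` and
`τ_F'(y₀) = ∂F/∂y (y₀, τ_F(y₀)) / (1 − ∂F/∂z (y₀, τ_F(y₀)))`. -/
theorem heins_map_derivative_unit_disc
    (Y : Set ℂ) (hYopen : IsOpen Y) (hYne : Y.Nonempty)
    (F : ℂ × ℂ → ℂ)
    (hF : DifferentiableOn ℂ F (Y ×ˢ Metric.ball (0 : ℂ) 1))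
    (hFmaps : ∀ y ∈ Y, ∀ z ∈ Metric.ball (0 : ℂ) 1,
      F (y, z) ∈ Metric.ball (0 : ℂ) 1)
    (hFcpt : ∀ y ∈ Y,
      IsCompact (closure ((fun z => F (y, z)) '' Metric.ball (0 : ℂ) 1)))
    (hFsub : ∀ y ∈ Y,
      closure ((fun z => F (y, z)) '' Metric.ball (0 : ℂ) 1) ⊆
        Metric.ball (0 : ℂ) 1)
    (τ : ℂ → ℂ)
    (hτmem : ∀ y ∈ Y, τ y ∈ Metric.ball (0 : ℂ) 1)
    (hτfix : ∀ y ∈ Y, F (y, τ y) = τ y) :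
    DifferentiableOn ℂ τ Y ∧
      ∀ y₀ ∈ Y, deriv τ y₀ =
        deriv (fun y => F (y, τ y₀)) y₀ /
          (1 - deriv (fun z => F (y₀, z)) (τ y₀)) :=
  heins_map_derivative_unit_disc_general Y hYopen F hF hFcpt hFsub τ hτmem hτfix
end
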